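/- arXiv:1709.01668 — 9 statements merged into one kernel-verified Lean document; each statement's English description precedes it below -/
import Mathlib

section
/- For λ > 0 and c ∈ ℝ, the set of minimizers of x ↦ λ|x| + (1/2)(x - c)² is the singleton {sign(c) · max(|c| - λ, 0)} (the soft thresholding operator). -/
/-!
With `t` the soft threshold of `c`, write `c = t + λ g` where `g` is a subgradient of `|·|`
at `t` (`|g| ≤ 1`, `g t = |t|`): take `g = sign c` when `|c| > λ` and `g = c / λ` otherwise.
Expanding the square then gives the quadratic growth bound
`f y ≥ f t + (y - t)² / 2` for `f x = λ|x| + (x - c)² / 2`,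
which shows at once that `t` is a minimizer and that it is the only one.
-/

noncomputable def softThreshold (lam c : ℝ) : ℝ := Real.sign c * max (|c| - lam) 0

lemma softThreshold_of_abs_le {lam c : ℝ} (h : |c| ≤ lam) : softThreshold lam c = 0 := by
  rw [softThreshold, max_eq_right (by linarith), mul_zero]

lemma softThreshold_of_lt {lam c : ℝ} (hlam : 0 ≤ lam) (h : lam < c) :
    softThreshold lam c = c - lam := by
  have hc : 0 < c := hlam.trans_lt h
  rw [softThreshold, Real.sign_of_pos hc, abs_of_pos hc, max_eq_left (by linarith), one_mul]

lemma softThreshold_of_lt_neg {lam c : ℝ} (hlam : 0 ≤ lam) (h : c < -lam) :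
    softThreshold lam c = c + lam := by
  have hc : c < 0 := h.trans_le (neg_nonpos.mpr hlam)
  rw [softThreshold, Real.sign_of_neg hc, abs_of_neg hc, max_eq_left (by linarith)]
  ring

lemma exists_subgradient_softThreshold {lam : ℝ} (hlam : 0 < lam) (c : ℝ) :
    ∃ g : ℝ, |g| ≤ 1 ∧ g * softThreshold lam c = |softThreshold lam c| ∧
      c = softThreshold lam c + lam * g := by
  rcases le_or_gt |c| lam with h | h
  · refine ⟨c / lam, ?_, ?_, ?_⟩
    · rw [abs_div, abs_of_pos hlam]
      exact div_le_one_of_le₀ h hlam.le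
    · simp [softThreshold_of_abs_le h]
    · rw [softThreshold_of_abs_le h]
      field_simp
      ring
  rcases lt_abs.mp h with h | h
  · refine ⟨1, by simp, ?_, by rw [softThreshold_of_lt hlam.le h]; ring⟩
    rw [softThreshold_of_lt hlam.le h, one_mul, abs_of_pos (by linarith)]
  · refine ⟨-1, by simp, ?_, by rw [softThreshold_of_lt_neg hlam.le (by linarith)]; ring⟩
    rw [softThreshold_of_lt_neg hlam.le (by linarith), abs_of_neg (by linarith)]
    ring

lemma add_sq_div_two_le_of_subgradient {lam c t g : ℝ} (hlam : 0 ≤ lam) (hg : |g| ≤ 1)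
    (hgt : g * t = |t|) (hc : c = t + lam * g) (y : ℝ) :
    lam * |t| + (t - c) ^ 2 / 2 + (y - t) ^ 2 / 2 ≤ lam * |y| + (y - c) ^ 2 / 2 := by
  have hgy : g * y ≤ |y| :=
    (le_abs_self _).trans (by rw [abs_mul]; exact mul_le_of_le_one_left (abs_nonneg y) hg)
  subst hc
  nlinarith [mul_le_mul_of_nonneg_left hgy hlam]

theorem soft_thresholding (lam : ℝ) (hlam : 0 < lam) (c : ℝ) :
    {x : ℝ | ∀ y : ℝ, lam * |x| + (x - c) ^ 2 / 2 ≤ lam * |y| + (y - c) ^ 2 / 2}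
      = {Real.sign c * max (|c| - lam) 0} := by
  obtain ⟨g, hg, hgt, hc⟩ := exists_subgradient_softThreshold hlam c
  have growth := add_sq_div_two_le_of_subgradient hlam.le hg hgt hc
  change _ = {softThreshold lam c}
  refine Set.eq_singleton_iff_unique_mem.mpr ⟨fun y ↦ ?_, fun x hx ↦ ?_⟩
  · linarith [growth y, sq_nonneg (y - softThreshold lam c)]
  · have hsq : (x - softThreshold lam c) ^ 2 ≤ 0 := by
      linarith [growth x, hx (softThreshold lam c)]
    exact sub_eq_zero.mp (pow_eq_zero_iff two_ne_zero |>.mp (le_antisymm hsq (sq_nonneg _)))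
end

section
/- For λ > 0 and c ∈ ℝ, the set of minimizers of x ↦ λ‖x‖₀ + (1/2)(x - c)² equals {c} if |c| > √(2λ), equals {0, c} if |c| = √(2λ), and equals {0} if |c| < √(2λ). -/
/-- The ℓ0 "norm" on ℝ: `0` if `x = 0`, else `1`. -/
noncomputable def l0 (x : ℝ) : ℝ := if x = 0 then 0 else 1

theorem hard_thresholding (lam : ℝ) (hlam : 0 < lam) (c : ℝ) :
    (|c| > Real.sqrt (2 * lam) →
      {x : ℝ | ∀ y : ℝ, lam * l0 x + (x - c) ^ 2 / 2 ≤ lam * l0 y + (y - c) ^ 2 / 2}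
        = {c}) ∧
    (|c| = Real.sqrt (2 * lam) →
      {x : ℝ | ∀ y : ℝ, lam * l0 x + (x - c) ^ 2 / 2 ≤ lam * l0 y + (y - c) ^ 2 / 2}
        = {0, c}) ∧
    (|c| < Real.sqrt (2 * lam) →
      {x : ℝ | ∀ y : ℝ, lam * l0 x + (x - c) ^ 2 / 2 ≤ lam * l0 y + (y - c) ^ 2 / 2}
        = {0}) := by
  have hs2 : Real.sqrt (2 * lam) ^ 2 = 2 * lam := Real.sq_sqrt (by linarith)
  have hspos : 0 < Real.sqrt (2 * lam) := Real.sqrt_pos.mpr (by linarith)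
  refine ⟨?_, ?_, ?_⟩
  · intro h
    have hc2 : 2 * lam < c ^ 2 := by nlinarith [sq_abs c]
    have hc0 : c ≠ 0 := by
      intro h0; rw [h0, abs_zero] at h; linarith
    ext x
    simp only [Set.mem_setOf_eq, Set.mem_singleton_iff]
    constructor
    · intro hx
      by_cases hx0 : x = 0
      · exfalso
        have := hx c
        simp [l0, hx0, hc0] at this
        nlinarith
      · have := hx c
        simp [l0, hx0, hc0] at this
        have h2 : (x - c) ^ 2 = 0 := le_antisymm (by nlinarith) (sq_nonneg _)
        have := pow_eq_zero_iff (n := 2) (by norm_num) |>.mp h2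
        linarith [sub_eq_zero.mp this]
    · intro hx; subst hx
      intro y
      by_cases hy : y = 0
      · simp [l0, hy, hc0]; nlinarith
      · simp [l0, hy, hc0]; nlinarith [sq_nonneg (y - x)]
  · intro h
    have hc2 : c ^ 2 = 2 * lam := by nlinarith [sq_abs c]
    have hc0 : c ≠ 0 := by
      intro h0; rw [h0, abs_zero] at h; linarith
    ext x
    simp only [Set.mem_setOf_eq, Set.mem_insert_iff, Set.mem_singleton_iff]
    constructor
    · intro hx
      by_cases hx0 : x = 0
      · exact Or.inl hx0
      · right
        have := hx c
        simp [l0, hx0, hc0] at this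
        have h2 : (x - c) ^ 2 = 0 := le_antisymm (by nlinarith) (sq_nonneg _)
        have := pow_eq_zero_iff (n := 2) (by norm_num) |>.mp h2
        linarith [sub_eq_zero.mp this]
    · rintro (hx | hx) <;> subst hx <;> intro y <;> by_cases hy : y = 0
      · simp [l0, hy]
      · simp [l0, hy]; nlinarith [sq_nonneg (y - c)]
      · simp [l0, hy, hc0]; nlinarith
      · simp [l0, hy, hc0]; nlinarith [sq_nonneg (y - x)]
  · intro h
    have hc2 : c ^ 2 < 2 * lam := by nlinarith [sq_abs c, abs_nonneg c]
    ext x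
    simp only [Set.mem_setOf_eq, Set.mem_singleton_iff]
    constructor
    · intro hx
      by_contra hx0
      have := hx 0
      simp [l0, hx0] at this
      nlinarith [sq_nonneg (x - c)]
    · intro hx; subst hx
      intro y
      by_cases hy : y = 0
      · simp [l0, hy]
      · simp [l0, hy]; nlinarith [sq_nonneg (y - c)]
end

section
/- Let λ > 0 and c ∈ ℝ, and let X̃ = [l̃, ũ] ⊂ ℝ be a closed interval. Every minimizer x* of h(x) = δ_{X̃}(x) + λ‖x‖₀ + (1/2)(x - c)² satisfies: if x* ≠ 0 then |x*| ≥ min of the set ({|l̃|, |ũ|, √(2λ)} \ {0}). -/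
/-!
A nonzero minimizer `x` pays the full penalty `λ`, so it also minimizes `(y - c)²` over the
interval. Either `x` is an endpoint, or it is an interior minimizer and hence `x = c`; in the
latter case, if `0` is feasible, comparing with `y = 0` gives `λ ≤ c² / 2`, i.e. `|x| ≥ √(2λ)`.
If `0` is not feasible, `|x|` is at least the absolute value of the endpoint nearest to `0`.
-/

open Set Topology

@[simp]
lemma l0_zero : l0 0 = 0 := if_pos rfl

lemma l0_of_ne_zero {x : ℝ} (hx : x ≠ 0) : l0 x = 1 := if_neg hx

lemma l0_le_one (x : ℝ) : l0 x ≤ 1 := by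
  unfold l0
  split_ifs <;> norm_num

section Minimizer

variable {lam c x : ℝ} {s : Set ℝ}

lemma isMinOn_sq_sub_of_isMinOn_l0 (hlam : 0 ≤ lam)
    (hmin : IsMinOn (fun y => lam * l0 y + (y - c) ^ 2 / 2) s x) (hx : x ≠ 0) :
    IsMinOn (fun y => (y - c) ^ 2) s x := by
  refine isMinOn_iff.mpr fun y hy => ?_
  have hxy := isMinOn_iff.mp hmin y hy
  have hpen : lam * l0 y ≤ lam := mul_le_of_le_one_right hlam (l0_le_one y)
  rw [l0_of_ne_zero hx] at hxy
  linarith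

lemma two_mul_add_sq_sub_le_sq_of_isMinOn_l0
    (hmin : IsMinOn (fun y => lam * l0 y + (y - c) ^ 2 / 2) s x) (hx : x ≠ 0) (h0 : 0 ∈ s) :
    2 * lam + (x - c) ^ 2 ≤ c ^ 2 := by
  have hx0 := isMinOn_iff.mp hmin 0 h0
  rw [l0_of_ne_zero hx, l0_zero] at hx0
  linarith

lemma eq_of_isMinOn_sq_sub (hmin : IsMinOn (fun y => (y - c) ^ 2) s x) (hs : s ∈ 𝓝 x) :
    x = c := by
  have hderiv : HasDerivAt (fun y => (y - c) ^ 2) (2 * (x - c)) x := by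
    simpa using ((hasDerivAt_id x).sub_const c).fun_pow 2
  have := (hmin.isLocalMin hs).hasDerivAt_eq_zero hderiv
  linarith

end Minimizer

lemma ne_zero_and_abs_le_abs_of_zero_notMem_Icc {a b x : ℝ} (hx : x ∈ Icc a b)
    (h0 : 0 ∉ Icc a b) : (a ≠ 0 ∧ |a| ≤ |x|) ∨ (b ≠ 0 ∧ |b| ≤ |x|) := by
  rw [mem_Icc, not_and_or, not_le, not_le] at h0
  rcases h0 with ha | hb
  · exact .inl ⟨ha.ne', by rw [abs_of_pos ha, abs_of_pos (ha.trans_le hx.1)]; exact hx.1⟩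
  · exact .inr ⟨hb.ne, by rw [abs_of_neg hb, abs_of_neg (hx.2.trans_lt hb)]; linarith [hx.2]⟩

theorem nonzero_minimizer_lower_bound_general (lam : ℝ) (hlam : 0 < lam) (c lt ut : ℝ)
    (xs : ℝ) (hmem : xs ∈ Set.Icc lt ut)
    (hmin : ∀ y ∈ Set.Icc lt ut,
      lam * l0 xs + (xs - c) ^ 2 / 2 ≤ lam * l0 y + (y - c) ^ 2 / 2)
    (hne : xs ≠ 0) :
    sInf (({|lt|, |ut|, Real.sqrt (2 * lam)} : Set ℝ) \ {0}) ≤ |xs| := by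
  suffices ∃ a ∈ ({|lt|, |ut|, Real.sqrt (2 * lam)} : Set ℝ), a ≠ 0 ∧ a ≤ |xs| by
    obtain ⟨a, ha, ha0, hle⟩ := this
    exact csInf_le_of_le ((toFinite _).sdiff.bddBelow) ⟨ha, ha0⟩ hle
  have habs : |xs| ≠ 0 := abs_ne_zero.mpr hne
  by_cases h0 : 0 ∈ Icc lt ut
  swap
  · rcases ne_zero_and_abs_le_abs_of_zero_notMem_Icc hmem h0 with ⟨hl, hle⟩ | ⟨hu, hle⟩
    · exact ⟨|lt|, by simp, abs_ne_zero.mpr hl, hle⟩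
    · exact ⟨|ut|, by simp, abs_ne_zero.mpr hu, hle⟩
  rcases hmem.1.eq_or_lt with hl | hl
  · exact ⟨|lt|, by simp, hl ▸ habs, hl ▸ le_rfl⟩
  rcases hmem.2.eq_or_lt with hu | hu
  · exact ⟨|ut|, by simp, hu ▸ habs, hu ▸ le_rfl⟩
  have hmin' : IsMinOn (fun y => lam * l0 y + (y - c) ^ 2 / 2) (Icc lt ut) xs :=
    isMinOn_iff.mpr hmin
  have hxc : xs = c :=
    eq_of_isMinOn_sq_sub (isMinOn_sq_sub_of_isMinOn_l0 hlam.le hmin' hne) (Icc_mem_nhds hl hu)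
  have hsq : 2 * lam ≤ xs ^ 2 := by
    have := two_mul_add_sq_sub_le_sq_of_isMinOn_l0 hmin' hne h0
    rw [← hxc, sub_self] at this
    linarith
  refine ⟨Real.sqrt (2 * lam), by simp, (Real.sqrt_pos.mpr (by positivity)).ne', ?_⟩
  exact (Real.sqrt_le_sqrt hsq).trans_eq (Real.sqrt_sq_eq_abs xs)

theorem nonzero_minimizer_lower_bound (lam : ℝ) (hlam : 0 < lam) (c lt ut : ℝ)
    (hlu : lt ≤ ut) (xs : ℝ) (hmem : xs ∈ Set.Icc lt ut)
    (hmin : ∀ y ∈ Set.Icc lt ut,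
      lam * l0 xs + (xs - c) ^ 2 / 2 ≤ lam * l0 y + (y - c) ^ 2 / 2)
    (hne : xs ≠ 0) :
    sInf (({|lt|, |ut|, Real.sqrt (2 * lam)} : Set ℝ) \ {0}) ≤ |xs| :=
  nonzero_minimizer_lower_bound_general lam hlam c lt ut xs hmem hmin hne
end

section
/- Let g : ℝⁿ → ℝ ∪ {+∞} be proper closed convex, f : ℝⁿ → ℝ convex differentiable with L-Lipschitz gradient, and h = f + g. Define B_L(y) = (I + ∂g/L)^{-1}(y − ∇f(y)/L), i.e., B_L(y) = argmin_x g(x) + (L/2)‖x − (y − ∇f(y)/L)‖². Then for all x, y ∈ ℝⁿ, h(x) − h(B_L(y)) ≥ (L/2)‖B_L(y) − y‖² + L⟨y − x, B_L(y) − y⟩. -/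
/-!
The point `p = B_L(y)` minimizes `g + (L/2)‖· - u‖²` with `u = y - ∇f(y)/L`. Comparing the
value at `p` with the values on the segment from `p` to `x` and letting the step tend to zero
gives the optimality condition `g x ≥ g p + L⟪u - p, x - p⟫`. Add to it the gradient inequality
`f x ≥ f y + ⟪∇f y, x - y⟫` of the convex `f` and the descent lemma
`f p ≤ f y + ⟪∇f y, p - y⟫ + (L/2)‖p - y‖²` of the `L`-smooth `f`: the terms in `∇f y` cancel
and what is left is the claimed quadratic expression.
-/

open scoped RealInnerProductSpace
open Set Filter Topology

section LineDeriv

variable {E : Type*} [AddCommGroup E] [Module ℝ E] {s : Set E} {g : E → ℝ} {x y : E}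

theorem ConvexOn.slope_le_sub (hg : ConvexOn ℝ s g) (hx : x ∈ s) (hy : y ∈ s) {t : ℝ}
    (ht₀ : 0 < t) (ht₁ : t ≤ 1) : t⁻¹ • (g (x + t • (y - x)) - g x) ≤ g y - g x := by
  have h := hg.2 hx hy (sub_nonneg.2 ht₁) ht₀.le (sub_add_cancel 1 t)
  rw [show (1 - t) • x + t • y = x + t • (y - x) by module, smul_eq_mul, smul_eq_mul] at h
  rw [smul_eq_mul, inv_mul_le_iff₀ ht₀]
  linarith

theorem ConvexOn.eventually_slope_le_sub (hg : ConvexOn ℝ s g) (hx : x ∈ s) (hy : y ∈ s) :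
    ∀ᶠ t in 𝓝[>] (0 : ℝ), t⁻¹ • (g (x + t • (y - x)) - g x) ≤ g y - g x := by
  filter_upwards [Ioo_mem_nhdsGT zero_lt_one] with t ht
  exact hg.slope_le_sub hx hy ht.1 ht.2.le

theorem ConvexOn.le_sub_of_hasLineDerivAt (hg : ConvexOn ℝ s g) (hx : x ∈ s) (hy : y ∈ s)
    {g' : ℝ} (hg' : HasLineDerivAt ℝ g g' x (y - x)) : g' ≤ g y - g x :=
  le_of_tendsto hg'.tendsto_slope_zero_right (hg.eventually_slope_le_sub hx hy)

theorem ConvexOn.neg_le_sub_of_isMinOn_add (hg : ConvexOn ℝ s g) (hx : x ∈ s) (hy : y ∈ s)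
    {h : E → ℝ} {h' : ℝ} (hmin : IsMinOn (fun z => g z + h z) s x)
    (hh : HasLineDerivAt ℝ h h' x (y - x)) : -h' ≤ g y - g x := by
  refine le_of_tendsto hh.tendsto_slope_zero_right.neg ?_
  filter_upwards [hg.eventually_slope_le_sub hx hy, Ioo_mem_nhdsGT zero_lt_one]
    with t hslope ht
  have hmin_t : g x + h x ≤ g (x + t • (y - x)) + h (x + t • (y - x)) :=
    hmin (hg.1.add_smul_sub_mem hx hy ⟨ht.1.le, ht.2.le⟩)
  have hslopes : -(t⁻¹ • (h (x + t • (y - x)) - h x)) ≤ t⁻¹ • (g (x + t • (y - x)) - g x) := by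
    rw [← smul_neg, smul_le_smul_iff_of_pos_left (inv_pos.2 ht.1)]
    linarith
  exact hslopes.trans hslope

end LineDeriv

section InnerProductSpace

variable {F : Type*} [NormedAddCommGroup F] [InnerProductSpace ℝ F]

theorem hasLineDerivAt_half_mul_norm_sub_sq (c : ℝ) (u x v : F) :
    HasLineDerivAt ℝ (fun z => c / 2 * ‖z - u‖ ^ 2) (c * ⟪x - u, v⟫) x v := by
  have h : HasDerivAt (fun t : ℝ => x + t • v - u) v 0 := by
    simpa using ((hasDerivAt_id (0 : ℝ)).smul_const v).const_add x |>.sub_const u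
  simpa [HasLineDerivAt] using
    (h.norm_sq.const_mul (c / 2)).congr_deriv (by rw [zero_smul, add_zero]; ring)

variable [CompleteSpace F] {f : F → ℝ} {f' : F → F}

theorem HasGradientAt.hasLineDerivAt {x : F} (hf : HasGradientAt f (f' x) x) (v : F) :
    HasLineDerivAt ℝ f ⟪f' x, v⟫ x v := by
  simpa using hf.hasFDerivAt.hasLineDerivAt v

theorem hasDerivAt_comp_add_smul (hf : ∀ x, HasGradientAt f (f' x) x) (x v : F) (t : ℝ) :
    HasDerivAt (fun s : ℝ => f (x + s • v)) ⟪f' (x + t • v), v⟫ t := by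
  have h : HasDerivAt (fun s : ℝ => x + s • v) v t := by
    simpa using ((hasDerivAt_id t).smul_const v).const_add x
  simpa [Function.comp_def] using (hf (x + t • v)).hasFDerivAt.comp_hasDerivAt t h

theorem le_add_inner_add_sq_of_lipschitz_gradient {L : ℝ} (hf : ∀ x, HasGradientAt f (f' x) x)
    (hlip : ∀ x y, ‖f' x - f' y‖ ≤ L * ‖x - y‖) (x y : F) :
    f y ≤ f x + ⟪f' x, y - x⟫ + L / 2 * ‖y - x‖ ^ 2 := by
  set d := y - x
  set ψ : ℝ → ℝ := fun t => f (x + t • d) - t * ⟪f' x, d⟫ - L / 2 * t ^ 2 * ‖d‖ ^ 2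
  have hψ : ∀ t, HasDerivAt ψ (⟪f' (x + t • d) - f' x, d⟫ - L * t * ‖d‖ ^ 2) t := by
    intro t
    have hsq : HasDerivAt (fun t : ℝ => L / 2 * t ^ 2 * ‖d‖ ^ 2) (L * t * ‖d‖ ^ 2) t := by
      simpa using
        ((hasDerivAt_pow 2 t).const_mul (L / 2)).mul_const (‖d‖ ^ 2) |>.congr_deriv (by ring)
    exact ((hasDerivAt_comp_add_smul hf x d t).sub (hasDerivAt_mul_const ⟪f' x, d⟫)).sub hsq
      |>.congr_deriv (by rw [inner_sub_left])
  have hψ_nonpos : ∀ t ∈ interior (Ici (0 : ℝ)),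
      ⟪f' (x + t • d) - f' x, d⟫ - L * t * ‖d‖ ^ 2 ≤ 0 := by
    rw [interior_Ici]
    intro t (ht : 0 < t)
    rw [sub_nonpos]
    calc ⟪f' (x + t • d) - f' x, d⟫ ≤ ‖f' (x + t • d) - f' x‖ * ‖d‖ := real_inner_le_norm _ _
      _ ≤ L * ‖t • d‖ * ‖d‖ := by
        gcongr
        simpa using hlip (x + t • d) x
      _ = L * t * ‖d‖ ^ 2 := by rw [norm_smul, Real.norm_of_nonneg ht.le]; ring
  have hanti : AntitoneOn ψ (Ici 0) :=
    antitoneOn_of_hasDerivWithinAt_nonpos (convex_Ici 0)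
      (fun t _ => (hψ t).continuousAt.continuousWithinAt)
      (fun t _ => (hψ t).hasDerivWithinAt) hψ_nonpos
  have hψ₀ : ψ 0 = f x := by simp [ψ]
  have hψ₁ : ψ 1 = f y - ⟪f' x, d⟫ - L / 2 * ‖d‖ ^ 2 := by simp [ψ, d]
  linarith [hanti (mem_Ici.2 le_rfl) (mem_Ici.2 zero_le_one) zero_le_one]

end InnerProductSpace

theorem prox_grad_inequality_general {n : ℕ}
    (f g : EuclideanSpace ℝ (Fin n) → ℝ)
    (f' : EuclideanSpace ℝ (Fin n) → EuclideanSpace ℝ (Fin n)) (L : ℝ) (hL : 0 < L)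
    (hgconv : ConvexOn ℝ Set.univ g)
    (hfconv : ConvexOn ℝ Set.univ f)
    (hgrad : ∀ x, HasGradientAt f (f' x) x)
    (hlip : ∀ x y, ‖f' x - f' y‖ ≤ L * ‖x - y‖)
    (B : EuclideanSpace ℝ (Fin n) → EuclideanSpace ℝ (Fin n))
    (hB : ∀ y, IsMinOn (fun x => g x + L / 2 * ‖x - (y - L⁻¹ • f' y)‖ ^ 2)
      Set.univ (B y)) :
    ∀ x y, (f x + g x) - (f (B y) + g (B y)) ≥
      L / 2 * ‖B y - y‖ ^ 2 + L * ⟪y - x, B y - y⟫ := by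
  intro x y
  have hprox := hgconv.neg_le_sub_of_isMinOn_add (mem_univ _) (mem_univ x) (hB y)
    (hasLineDerivAt_half_mul_norm_sub_sq L _ (B y) (x - B y))
  have hconv := hfconv.le_sub_of_hasLineDerivAt (mem_univ y) (mem_univ x)
    ((hgrad y).hasLineDerivAt (x - y))
  have hdesc := le_add_inner_add_sq_of_lipschitz_gradient hgrad hlip y (B y)
  have hsplit : x - B y = (x - y) - (B y - y) := by abel
  have hshift : L * ⟪B y - (y - L⁻¹ • f' y), x - B y⟫
      = L * ⟪B y - y, x - B y⟫ + ⟪f' y, x - B y⟫ := by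
    rw [sub_sub_eq_add_sub, add_sub_right_comm, inner_add_left, inner_smul_left, mul_add,
      conj_trivial, ← mul_assoc, mul_inv_cancel₀ hL.ne', one_mul]
  have hquad : ⟪B y - y, x - B y⟫ = -⟪y - x, B y - y⟫ - ‖B y - y‖ ^ 2 := by
    rw [hsplit, inner_sub_right, real_inner_self_eq_norm_sq, ← neg_sub x y, inner_neg_left,
      neg_neg, real_inner_comm]
  have hlin : ⟪f' y, x - B y⟫ = ⟪f' y, x - y⟫ - ⟪f' y, B y - y⟫ := by
    rw [hsplit, inner_sub_right]
  rw [hshift, hquad, hlin] at hprox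
  linarith

/-- Fundamental proximal gradient inequality (Beck–Teboulle). Here the proper closed
convex function `g` is taken real-valued (convex and continuous, hence closed), and
`B y` is the proximal-gradient point, i.e. the minimizer of
`x ↦ g x + (L/2)‖x - (y - ∇f(y)/L)‖²`. -/
theorem prox_grad_inequality {n : ℕ}
    (f g : EuclideanSpace ℝ (Fin n) → ℝ)
    (f' : EuclideanSpace ℝ (Fin n) → EuclideanSpace ℝ (Fin n)) (L : ℝ) (hL : 0 < L)
    (hgconv : ConvexOn ℝ Set.univ g) (hgcont : Continuous g)
    (hfconv : ConvexOn ℝ Set.univ f)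
    (hgrad : ∀ x, HasGradientAt f (f' x) x)
    (hlip : ∀ x y, ‖f' x - f' y‖ ≤ L * ‖x - y‖)
    (B : EuclideanSpace ℝ (Fin n) → EuclideanSpace ℝ (Fin n))
    (hB : ∀ y, IsMinOn (fun x => g x + L / 2 * ‖x - (y - L⁻¹ • f' y)‖ ^ 2)
      Set.univ (B y)) :
    ∀ x y, (f x + g x) - (f (B y) + g (B y)) ≥
      L / 2 * ‖B y - y‖ ^ 2 + L * ⟪y - x, B y - y⟫ :=
  prox_grad_inequality_general f g f' L hL hgconv hfconv hgrad hlip B hB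
end

section
/- Let {x^k} ⊂ ℝⁿ be a sequence such that ‖x^k − y^k‖ → 0, where the support of y^k is contained in the support of x^{k-1}, and suppose there is a constant ls > 0 such that every nonzero component of every x^k has absolute value at least ls. Then there exists k₀ such that for all k ≥ k₀, supp(x^k) ⊆ supp(x^{k-1}); consequently the zero-index set I(x^k) changes only finitely often. -/
open Filter

lemma abs_apply_le_norm {n : ℕ} (z : EuclideanSpace ℝ (Fin n)) (i : Fin n) :
    |z i| ≤ ‖z‖ := by
  rw [EuclideanSpace.norm_eq]
  have h1 : |z i| = Real.sqrt (‖z i‖ ^ 2) := by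
    rw [Real.sqrt_sq_eq_abs]; simp
  rw [h1]
  apply Real.sqrt_le_sqrt
  exact Finset.single_le_sum (fun j _ => sq_nonneg ‖z j‖) (Finset.mem_univ i)

/-- Finitely many support changes: if `‖x^k - y^k‖ → 0`, the support of `y^k` is
contained in the support of `x^{k-1}`, and nonzero components of the `x^k` are
uniformly bounded below in magnitude by `ls > 0`, then eventually
`supp(x^k) ⊆ supp(x^{k-1})`, and the zero-index set `I(x^k)` is eventually constant. -/
theorem support_eventually_constant {n : ℕ}
    (x y : ℕ → EuclideanSpace ℝ (Fin n)) (ls : ℝ) (hls : 0 < ls)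
    (hxy : Tendsto (fun k => ‖x k - y k‖) atTop (nhds 0))
    (hsupp : ∀ k, ∀ i, y (k + 1) i ≠ 0 → x k i ≠ 0)
    (hlow : ∀ k, ∀ i, x k i ≠ 0 → ls ≤ |x k i|) :
    (∃ k₀, ∀ k ≥ k₀, ∀ i, x (k + 1) i ≠ 0 → x k i ≠ 0) ∧
      ∃ k₀, ∀ k ≥ k₀, {i | x k i = 0} = {i | x k₀ i = 0} := by
  -- eventually ‖x k - y k‖ < ls
  have hev : ∀ᶠ k in atTop, ‖x k - y k‖ < ls := by
    have := hxy.eventually (gt_mem_nhds hls)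
    exact this
  obtain ⟨K, hK⟩ := eventually_atTop.mp hev
  -- main support inclusion
  have main : ∀ k ≥ K, ∀ i, x (k + 1) i ≠ 0 → x k i ≠ 0 := by
    intro k hk i hxi hxk
    by_cases hy : y (k + 1) i = 0
    · have h1 : ls ≤ |x (k + 1) i| := hlow (k + 1) i hxi
      have h2 : |(x (k + 1) - y (k + 1)) i| ≤ ‖x (k + 1) - y (k + 1)‖ :=
        abs_apply_le_norm _ i
      have h3 : (x (k + 1) - y (k + 1)) i = x (k + 1) i := by
        simp [hy]
      rw [h3] at h2
      have h4 : ‖x (k + 1) - y (k + 1)‖ < ls := hK (k + 1) (by omega)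
      linarith
    · exact (hsupp k i hy) hxk
  refine ⟨⟨K, main⟩, ?_⟩
  -- zero sets are increasing from K
  have mono : ∀ k ≥ K, {i | x k i = 0} ⊆ {i | x (k + 1) i = 0} := by
    intro k hk i hi
    by_contra h
    exact h (by_contra fun h' => (main k hk i h') hi)
  have monod : ∀ d k₁, K ≤ k₁ → {i | x k₁ i = 0} ⊆ {i | x (k₁ + d) i = 0} := by
    intro d
    induction d with
    | zero => intro k₁ _; exact subset_rfl
    | succ m ih =>
      intro k₁ h1
      exact (ih k₁ h1).trans (mono (k₁ + m) (by omega))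
  have mono' : ∀ k₁ k₂, K ≤ k₁ → k₁ ≤ k₂ → {i | x k₁ i = 0} ⊆ {i | x k₂ i = 0} := by
    intro k₁ k₂ h1 h2
    have h3 : k₂ = k₁ + (k₂ - k₁) := by omega
    rw [h3]
    exact monod (k₂ - k₁) k₁ h1
  -- cardinalities
  set c : ℕ → ℕ := fun k => ({i | x (K + k) i = 0}).ncard with hc
  have hbdd : BddAbove (Set.range c) := by
    refine ⟨n, ?_⟩
    rintro m ⟨k, rfl⟩
    calc c k ≤ (Set.univ : Set (Fin n)).ncard :=
          Set.ncard_le_ncard (Set.subset_univ _) Set.finite_univ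
      _ = n := by simp [Set.ncard_univ]
  have hne : (Set.range c).Nonempty := ⟨c 0, 0, rfl⟩
  obtain ⟨m, hm⟩ : sSup (Set.range c) ∈ Set.range c := Nat.sSup_mem hne hbdd
  refine ⟨K + m, fun k hk => ?_⟩
  have hsub : {i | x (K + m) i = 0} ⊆ {i | x k i = 0} :=
    mono' (K + m) k (by omega) hk
  have hcard : ({i | x k i = 0}).ncard ≤ ({i | x (K + m) i = 0}).ncard := by
    have hk' : k = K + (k - K) := by omega
    have : c (k - K) ≤ sSup (Set.range c) := le_csSup hbdd ⟨k - K, rfl⟩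
    rw [← hm] at this
    have h5 : K + (k - K) = k := by omega
    simpa [hc, h5] using this
  exact (Set.eq_of_subset_of_ncard_le hsub hcard (Set.toFinite _)).symm
end

section
/- Every nonzero component of any minimizer x^{k+1} of the subproblem min_{x∈X} λ‖x‖₀ + (L/2)‖x − y + ∇f(y)/L‖² + (μ/2)‖x − y‖², where X = {x : l ≤ x ≤ u} is a box, satisfies |x^{k+1}_i| ≥ ls := min(({|l_j|, |u_j|, √(2λ/(L+μ)) : j = 1,…,n}) \ {0}). -/
open scoped Classical

/-- `norm0 x` counts the nonzero entries of `x` (the ℓ0 "norm"), as a real number. -/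
noncomputable def norm0 {n : ℕ} (x : EuclideanSpace ℝ (Fin n)) : ℝ :=
  ((Finset.univ.filter fun i => x i ≠ 0).card : ℝ)

/-!
The objective is separable: up to a constant, its `j`-th summand is
`λ‖t‖₀ + ((L+μ)/2)(t - c_j)²` with `c_j = y_j - g_j/(L+μ)`, so each coordinate of a minimizer
minimizes this function over `[l_j, u_j]`. A nonzero minimizer `a` is either an endpoint, or lies
in an interval avoiding `0` (and then dominates the endpoint nearer to `0`), or is an interior
point of an interval containing `0`. In the last case the ℓ₀ term is locally constant, so `a = c_j`,
and comparing with `t = 0` gives `λ ≤ ((L+μ)/2) a²`.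
-/

open Set Finset

theorem IsMinOn.apply_of_sum {ι α : Type*} [Fintype ι] [DecidableEq ι]
    {φ : ι → α → ℝ} {s : ι → Set α} {x : ι → α}
    (h : IsMinOn (fun z => ∑ j, φ j (z j)) (univ.pi s) x) (hx : x ∈ univ.pi s) (i : ι) :
    IsMinOn (φ i) (s i) (x i) := by
  refine isMinOn_iff.2 fun t ht => ?_
  have hupd : Function.update x i t ∈ univ.pi s :=
    (Set.update_mem_pi_iff_of_mem hx).2 fun _ => ht
  have hle := isMinOn_iff.1 h _ hupd
  rw [Fintype.sum_eq_add_sum_compl i, Fintype.sum_eq_add_sum_compl i] at hle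
  simp only [Function.update_self] at hle
  have hrest : ∑ j ∈ {i}ᶜ, φ j (Function.update x i t j) = ∑ j ∈ {i}ᶜ, φ j (x j) :=
    sum_congr rfl fun j hj => by rw [Function.update_of_ne (by simpa using hj)]
  linarith

theorem IsMinOn.of_add_const {α : Type*} {f : α → ℝ} {s : Set α} {a : α} {K : ℝ}
    (h : IsMinOn (fun t => f t + K) s a) : IsMinOn f s a :=
  fun t ht => by simpa using h ht

noncomputable def l0Quadratic (lam β c t : ℝ) : ℝ :=
  lam * (if t = 0 then 0 else 1) + β / 2 * (t - c) ^ 2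

theorem eq_of_isMinOn_l0Quadratic {lam β c lo hi a : ℝ} (hβ : β ≠ 0) (ha0 : a ≠ 0)
    (ha : a ∈ Ioo lo hi) (hmin : IsMinOn (l0Quadratic lam β c) (Icc lo hi) a) : a = c := by
  have hloc : IsLocalMin (fun t => β / 2 * (t - c) ^ 2) a := by
    filter_upwards [Ioo_mem_nhds ha.1 ha.2, isOpen_ne.mem_nhds ha0] with t ht ht0
    have hle := isMinOn_iff.1 hmin t (Ioo_subset_Icc_self ht)
    simp only [l0Quadratic, if_neg ha0, if_neg ht0] at hle
    linarith
  have hderiv : HasDerivAt (fun t => β / 2 * (t - c) ^ 2) (β / 2 * (2 * (a - c))) a := by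
    simpa using ((hasDerivAt_id a).sub_const c).pow 2 |>.const_mul (β / 2)
  have hzero := hloc.hasDerivAt_eq_zero hderiv
  exact sub_eq_zero.1 (by simpa [hβ] using hzero)

theorem le_sq_of_isMinOn_l0Quadratic {lam β a lo hi : ℝ} (hβ : 0 < β) (ha0 : a ≠ 0)
    (h0 : (0 : ℝ) ∈ Icc lo hi) (hmin : IsMinOn (l0Quadratic lam β a) (Icc lo hi) a) :
    2 * lam / β ≤ a ^ 2 := by
  have hle := isMinOn_iff.1 hmin 0 h0
  simp only [l0Quadratic, if_neg ha0, if_true] at hle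
  rw [div_le_iff₀ hβ]
  nlinarith

theorem exists_le_abs_of_isMinOn_l0Quadratic {lam β c lo hi a : ℝ} (hlam : 0 < lam) (hβ : 0 < β)
    (ha : a ∈ Icc lo hi) (ha0 : a ≠ 0) (hmin : IsMinOn (l0Quadratic lam β c) (Icc lo hi) a) :
    ∃ s ∈ ({|lo|, |hi|, √(2 * lam / β)} : Set ℝ) \ {0}, s ≤ |a| := by
  rcases lt_or_ge 0 lo with hlo | hlo
  · refine ⟨|lo|, ⟨by simp, by simpa using hlo.ne'⟩, ?_⟩
    rw [abs_of_pos hlo, abs_of_pos (hlo.trans_le ha.1)]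
    exact ha.1
  rcases lt_or_ge hi 0 with hhi | hhi
  · refine ⟨|hi|, ⟨by simp, by simpa using hhi.ne⟩, ?_⟩
    rw [abs_of_neg hhi, abs_of_neg (ha.2.trans_lt hhi)]
    exact neg_le_neg ha.2
  rcases ha.1.eq_or_lt with hlo_eq | hlo'
  · exact ⟨|lo|, ⟨by simp, by simpa [hlo_eq] using ha0⟩, by rw [hlo_eq]⟩
  rcases ha.2.eq_or_lt with hhi_eq | hhi'
  · exact ⟨|hi|, ⟨by simp, by simpa [← hhi_eq] using ha0⟩, by rw [hhi_eq]⟩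
  obtain rfl := eq_of_isMinOn_l0Quadratic hβ.ne' ha0 ⟨hlo', hhi'⟩ hmin
  refine ⟨√(2 * lam / β), ⟨by simp, (Real.sqrt_pos.2 (by positivity)).ne'⟩, ?_⟩
  rw [← Real.sqrt_sq_eq_abs]
  exact Real.sqrt_le_sqrt (le_sq_of_isMinOn_l0Quadratic hβ ha0 ⟨hlo, hhi⟩ hmin)

theorem norm0_eq_sum {n : ℕ} (x : EuclideanSpace ℝ (Fin n)) :
    norm0 x = ∑ j, if x j = 0 then 0 else 1 := by
  simp [norm0, card_filter]

theorem half_mul_sq_add_half_mul_sq_eq {L mu y g : ℝ} (hL : L ≠ 0) (hLmu : L + mu ≠ 0) (t : ℝ) :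
    L / 2 * (t - y + L⁻¹ * g) ^ 2 + mu / 2 * (t - y) ^ 2 =
      (L + mu) / 2 * (t - (y - g / (L + mu))) ^ 2 + (g ^ 2 / (2 * L) - g ^ 2 / (2 * (L + mu))) := by
  field_simp
  ring

theorem objective_eq_sum_l0Quadratic {n : ℕ} {lam L mu : ℝ} (hL : L ≠ 0) (hLmu : L + mu ≠ 0)
    (y g z : EuclideanSpace ℝ (Fin n)) :
    lam * norm0 z + L / 2 * ‖z - y + L⁻¹ • g‖ ^ 2 + mu / 2 * ‖z - y‖ ^ 2 =
      ∑ j, (l0Quadratic lam (L + mu) (y j - g j / (L + mu)) (z j) +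
        (g j ^ 2 / (2 * L) - g j ^ 2 / (2 * (L + mu)))) := by
  simp only [norm0_eq_sum, EuclideanSpace.real_norm_sq_eq, mul_sum, ← sum_add_distrib]
  refine sum_congr rfl fun j _ => ?_
  simp only [PiLp.add_apply, PiLp.sub_apply, PiLp.smul_apply, smul_eq_mul, l0Quadratic]
  linear_combination half_mul_sq_add_half_mul_sq_eq (y := y j) (g := g j) hL hLmu (z j)

/-- Every nonzero component of a minimizer of the PIHT subproblem over the box `X`
has magnitude at least `ls = min(({|l_j|, |u_j|, √(2λ/(L+μ))}) \ {0})`. -/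
theorem subproblem_nonzero_lower_bound {n : ℕ}
    (lam mu L : ℝ) (hlam : 0 < lam) (hmu : 0 < mu) (hL : 0 < L)
    (l u : Fin n → ℝ) (y g : EuclideanSpace ℝ (Fin n))
    (X : Set (EuclideanSpace ℝ (Fin n)))
    (hX : X = {x : EuclideanSpace ℝ (Fin n) | ∀ i, l i ≤ x i ∧ x i ≤ u i})
    (w : EuclideanSpace ℝ (Fin n)) (hw : w ∈ X)
    (hmin : ∀ z ∈ X,
      lam * norm0 w + L / 2 * ‖w - y + L⁻¹ • g‖ ^ 2 + mu / 2 * ‖w - y‖ ^ 2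
        ≤ lam * norm0 z + L / 2 * ‖z - y + L⁻¹ • g‖ ^ 2 + mu / 2 * ‖z - y‖ ^ 2) :
    ∀ i, w i ≠ 0 →
      sInf ((((Set.range fun j => |l j|) ∪ (Set.range fun j => |u j|))
          ∪ {Real.sqrt (2 * lam / (L + mu))}) \ {0}) ≤ |w i| := by
  intro i hwi
  subst hX
  have hLmu : 0 < L + mu := by positivity
  have hbox : w.ofLp ∈ univ.pi fun j => Icc (l j) (u j) := fun j _ => hw j
  let φ (j : Fin n) (t : ℝ) : ℝ := l0Quadratic lam (L + mu) (y j - g j / (L + mu)) t +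
    (g j ^ 2 / (2 * L) - g j ^ 2 / (2 * (L + mu)))
  have hminOn : IsMinOn (fun z => ∑ j, φ j (z j)) (univ.pi fun j => Icc (l j) (u j)) w.ofLp := by
    refine isMinOn_iff.2 fun z hz => ?_
    simpa only [objective_eq_sum_l0Quadratic hL.ne' hLmu.ne'] using
      hmin (WithLp.toLp 2 z) fun j => hz j (mem_univ j)
  obtain ⟨s, hs, hle⟩ := exists_le_abs_of_isMinOn_l0Quadratic hlam hLmu (hbox i (mem_univ i)) hwi
    (hminOn.apply_of_sum hbox i).of_add_const
  refine csInf_le_of_le ⟨0, fun r hr => ?_⟩ ⟨?_, hs.2⟩ hle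
  · rcases hr.1 with (⟨j, rfl⟩ | ⟨j, rfl⟩) | rfl <;> positivity
  · rcases hs.1 with rfl | rfl | rfl <;> simp
end

section
/- Under Algorithm 1 with constant support after index k₀ (I(x^k) = I(x^{k+1}) for all k ≥ k₀), the iterates satisfy f(x^{k+1}) + (μ/2)‖x^{k+1} − y^{k+1}‖² + ((L+μ)/2)‖x^{k+1} − x^k‖² ≤ f(x^k) + ((L+μ)ω_k²/2)‖x^{k-1} − x^k‖² for k ≥ k₀; consequently, if 0 < ω_k ≤ ω < 1 for all k, then ∑_{k=1}^∞ ‖x^k − x^{k-1}‖² < ∞ and ‖x^k − x^{k-1}‖ → 0. -/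
/-!
Up to an additive constant, `Q(·; y)` is `((L + μ)/2)‖· - y‖² + ⟪∇f(y), · - y⟫`, so its minimiser
`x⁺` over the convex set `C` satisfies the three-point inequality
`Q(x⁺) + ((L + μ)/2)‖z - x⁺‖² ≤ Q(z)` for `z ∈ C`. Taking `z = x^k` and adding the descent lemma
`f(x⁺) ≤ f(y) + ⟪∇f(y), x⁺ - y⟫ + (L/2)‖x⁺ - y‖²` and the gradient inequality
`f(y) + ⟪∇f(y), x^k - y⟫ ≤ f(x^k)` gives the per-step estimate, with `‖x^k - y‖` controlled by the
extrapolation bound. When `ω_k ≤ ω < 1`, the Lyapunov quantity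
`f(x^k) + ((L + μ)ω²/2)‖x^k - x^{k-1}‖²` is bounded below and drops by at least
`((L + μ)(1 - ω²)/2)‖x^{k+1} - x^k‖²` at each step, so these squares are summable.
-/

open Filter Set AffineMap RealInnerProductSpace Topology

theorem nonneg_of_forall_mul_add_sq_mul_nonneg {a b : ℝ}
    (h : ∀ t ∈ Ioc (0 : ℝ) 1, 0 ≤ t * a + t ^ 2 * b) : 0 ≤ a := by
  have hlim : Tendsto (fun t : ℝ => a + t * b) (𝓝[>] 0) (𝓝 a) :=
    ((by fun_prop : Continuous fun t : ℝ => a + t * b).tendsto' 0 a (by simp)).mono_left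
      nhdsWithin_le_nhds
  refine ge_of_tendsto hlim ?_
  filter_upwards [Ioc_mem_nhdsGT zero_lt_one] with t ht
  have : 0 ≤ t * (a + t * b) := by linarith [h t ht]
  exact nonneg_of_mul_nonneg_right this ht.1

section InnerProductSpace

variable {E : Type*} [NormedAddCommGroup E] [InnerProductSpace ℝ E]

theorem IsMinOn.add_half_mul_norm_sub_sq_le {C : Set E} {A : ℝ} {g v u w : E}
    (hC : Convex ℝ C) (hu : u ∈ C) (hw : w ∈ C)
    (hmin : IsMinOn (fun z => A / 2 * ‖z - v‖ ^ 2 + ⟪g, z - v⟫) C u) :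
    A / 2 * ‖u - v‖ ^ 2 + ⟪g, u - v⟫ + A / 2 * ‖w - u‖ ^ 2
      ≤ A / 2 * ‖w - v‖ ^ 2 + ⟪g, w - v⟫ := by
  set q : E → ℝ := fun z => A / 2 * ‖z - v‖ ^ 2 + ⟪g, z - v⟫
  -- `δ` is the slope of `q` at `u` towards `w`; minimality of `u` on the segment forces `δ ≥ 0`.
  set δ : ℝ := A * ⟪u - v, w - u⟫ + ⟪g, w - u⟫
  have hexpand (t : ℝ) :
      q (lineMap u w t) = q u + t * δ + t ^ 2 * (A / 2 * ‖w - u‖ ^ 2) := by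
    have : lineMap u w t - v = (u - v) + t • (w - u) := by
      rw [lineMap_apply_module']; abel
    simp only [q, δ, this, norm_add_sq_real, inner_add_right, real_inner_smul_right,
      norm_smul, Real.norm_eq_abs, mul_pow, sq_abs]
    ring
  have hslope : 0 ≤ δ := by
    refine nonneg_of_forall_mul_add_sq_mul_nonneg (b := A / 2 * ‖w - u‖ ^ 2) fun t ht => ?_
    have := isMinOn_iff.mp hmin _ (hC.lineMap_mem hu hw ⟨ht.1.le, ht.2⟩)
    rw [hexpand] at this
    linarith
  have := hexpand 1
  simp only [q, lineMap_apply_one, one_mul, one_pow] at this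
  linarith

theorem half_mul_norm_add_inv_smul_sq {L : ℝ} (hL : L ≠ 0) (p g : E) :
    L / 2 * ‖p + L⁻¹ • g‖ ^ 2 = L / 2 * ‖p‖ ^ 2 + ⟪g, p⟫ + ‖g‖ ^ 2 / (2 * L) := by
  rw [norm_add_sq_real, real_inner_smul_right, norm_smul, Real.norm_eq_abs, mul_pow, sq_abs,
    real_inner_comm]
  field_simp

variable [CompleteSpace E] {f : E → ℝ} {f' : E → E}

theorem HasGradientAt.hasDerivAt_comp_lineMap {g v w : E} {t : ℝ}
    (hf : HasGradientAt f g (lineMap v w t)) :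
    HasDerivAt (fun s => f (lineMap v w s)) ⟪g, w - v⟫ t := by
  simpa [Function.comp_def] using
    (hasGradientAt_iff_hasFDerivAt.mp hf).comp_hasDerivAt t hasDerivAt_lineMap

theorem ConvexOn.add_inner_sub_le_of_hasGradientAt {s : Set E} {g v w : E}
    (hf : ConvexOn ℝ s f) (hv : v ∈ s) (hw : w ∈ s) (hg : HasGradientAt f g v) :
    f v + ⟪g, w - v⟫ ≤ f w := by
  have hline : ConvexOn ℝ (lineMap v w ⁻¹' s) (fun t : ℝ => f (lineMap v w t)) :=
    hf.comp_affineMap (lineMap v w)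
  have hderiv : HasDerivAt (fun t : ℝ => f (lineMap v w t)) ⟪g, w - v⟫ 0 :=
    HasGradientAt.hasDerivAt_comp_lineMap (by rwa [lineMap_apply_zero])
  have := hline.le_slope_of_hasDerivAt (by simpa using hv) (by simpa using hw) zero_lt_one
    hderiv
  rw [slope_def_field] at this
  simp only [lineMap_apply_zero, lineMap_apply_one, sub_zero, div_one] at this
  linarith

theorem le_add_inner_add_of_lipschitz_gradient {L : ℝ} (hgrad : ∀ x, HasGradientAt f (f' x) x)
    (hlip : ∀ a b, ‖f' a - f' b‖ ≤ L * ‖a - b‖) (u v : E) :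
    f u ≤ f v + ⟪f' v, u - v⟫ + L / 2 * ‖u - v‖ ^ 2 := by
  -- `φ` is `f` along `[v, u]`; by the Lipschitz bound the parabola `B` has the larger slope.
  set φ : ℝ → ℝ := fun t => f (lineMap v u t)
  set B : ℝ → ℝ := fun t => f v + t * ⟪f' v, u - v⟫ + t ^ 2 * (L / 2 * ‖u - v‖ ^ 2)
  have hφ (t : ℝ) : HasDerivAt φ ⟪f' (lineMap v u t), u - v⟫ t :=
    (hgrad _).hasDerivAt_comp_lineMap
  have hB (t : ℝ) : HasDerivAt B (⟪f' v, u - v⟫ + 2 * t * (L / 2 * ‖u - v‖ ^ 2)) t := by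
    simpa using (((hasDerivAt_id t).mul_const ⟪f' v, u - v⟫).const_add (f v)).fun_add
      ((hasDerivAt_pow 2 t).mul_const (L / 2 * ‖u - v‖ ^ 2))
  have hslope (t : ℝ) (ht : 0 ≤ t) :
      ⟪f' (lineMap v u t), u - v⟫ ≤ ⟪f' v, u - v⟫ + 2 * t * (L / 2 * ‖u - v‖ ^ 2) := by
    have hlip_t : ‖f' (lineMap v u t) - f' v‖ ≤ L * (t * ‖u - v‖) := by
      simpa [← vsub_eq_sub, lineMap_vsub_left, norm_smul, abs_of_nonneg ht] using
        hlip (lineMap v u t) v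
    calc ⟪f' (lineMap v u t), u - v⟫
        = ⟪f' v, u - v⟫ + ⟪f' (lineMap v u t) - f' v, u - v⟫ := by
          rw [inner_sub_left]; ring
      _ ≤ ⟪f' v, u - v⟫ + ‖f' (lineMap v u t) - f' v‖ * ‖u - v‖ := by
          gcongr; exact real_inner_le_norm _ _
      _ ≤ ⟪f' v, u - v⟫ + L * (t * ‖u - v‖) * ‖u - v‖ := by gcongr
      _ = _ := by ring
  have := image_le_of_deriv_right_le_deriv_boundary (a := 0) (b := 1)
    (fun t _ => (hφ t).continuousAt.continuousWithinAt) (fun t _ => (hφ t).hasDerivWithinAt)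
    (by simp [φ, B]) (fun t _ => (hB t).continuousAt.continuousWithinAt)
    (fun t _ => (hB t).hasDerivWithinAt) (fun t ht => hslope t ht.1)
    (right_mem_Icc.mpr zero_le_one)
  simpa [φ, B] using this

theorem ConvexOn.prox_gradient_step_le {L mu : ℝ} {C : Set E} {u v w : E} (hL : L ≠ 0)
    (hconv : ConvexOn ℝ univ f) (hgrad : ∀ x, HasGradientAt f (f' x) x)
    (hlip : ∀ a b, ‖f' a - f' b‖ ≤ L * ‖a - b‖) (hC : Convex ℝ C) (hw : w ∈ C) (hu : u ∈ C)
    (hmin : IsMinOn (fun z => L / 2 * ‖z - v + L⁻¹ • f' v‖ ^ 2 + mu / 2 * ‖z - v‖ ^ 2) C u) :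
    f u + mu / 2 * ‖u - v‖ ^ 2 + (L + mu) / 2 * ‖u - w‖ ^ 2
      ≤ f w + (L + mu) / 2 * ‖w - v‖ ^ 2 := by
  have hmin' : IsMinOn (fun z => (L + mu) / 2 * ‖z - v‖ ^ 2 + ⟪f' v, z - v⟫) C u :=
    isMinOn_iff.mpr fun z hz => by
      have := isMinOn_iff.mp hmin z hz
      simp only [half_mul_norm_add_inv_smul_sq hL] at this
      linarith
  have hthree := hmin'.add_half_mul_norm_sub_sq_le hC hu hw
  have hdescent := le_add_inner_add_of_lipschitz_gradient hgrad hlip u v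
  have hsupport := hconv.add_inner_sub_le_of_hasGradientAt (mem_univ v) (mem_univ w) (hgrad v)
  rw [norm_sub_rev u w]
  linarith

theorem ConvexOn.inertial_prox_gradient_step_le {L mu ω : ℝ} {C : Set E} {u v w p : E}
    (hL : L ≠ 0) (hLmu : 0 ≤ L + mu)
    (hconv : ConvexOn ℝ univ f) (hgrad : ∀ x, HasGradientAt f (f' x) x)
    (hlip : ∀ a b, ‖f' a - f' b‖ ≤ L * ‖a - b‖) (hC : Convex ℝ C) (hw : w ∈ C) (hu : u ∈ C)
    (hmin : IsMinOn (fun z => L / 2 * ‖z - v + L⁻¹ • f' v‖ ^ 2 + mu / 2 * ‖z - v‖ ^ 2) C u)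
    (hv : ‖v - w‖ ≤ ω * ‖w - p‖) :
    f u + mu / 2 * ‖u - v‖ ^ 2 + (L + mu) / 2 * ‖u - w‖ ^ 2
      ≤ f w + (L + mu) * ω ^ 2 / 2 * ‖p - w‖ ^ 2 := by
  have hv_sq : ‖w - v‖ ^ 2 ≤ ω ^ 2 * ‖p - w‖ ^ 2 := by
    rw [norm_sub_rev, norm_sub_rev p, ← mul_pow]
    exact pow_le_pow_left₀ (norm_nonneg _) hv 2
  calc f u + mu / 2 * ‖u - v‖ ^ 2 + (L + mu) / 2 * ‖u - w‖ ^ 2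
      ≤ f w + (L + mu) / 2 * ‖w - v‖ ^ 2 :=
        hconv.prox_gradient_step_le hL hgrad hlip hC hw hu hmin
    _ ≤ f w + (L + mu) / 2 * (ω ^ 2 * ‖p - w‖ ^ 2) := by gcongr
    _ = f w + (L + mu) * ω ^ 2 / 2 * ‖p - w‖ ^ 2 := by ring

end InnerProductSpace

theorem summable_of_add_le_of_le {G b : ℕ → ℝ} {k₀ : ℕ} {m : ℝ} (hb : ∀ k, 0 ≤ b k)
    (hG : ∀ k ≥ k₀, m ≤ G k) (hstep : ∀ k ≥ k₀, G (k + 1) + b (k + 1) ≤ G k) :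
    Summable b := by
  have hpartial (N : ℕ) : G (k₀ + N) + ∑ i ∈ Finset.range N, b (i + (k₀ + 1)) ≤ G k₀ := by
    induction N with
    | zero => simp
    | succ N ih =>
      rw [Finset.sum_range_succ, ← add_assoc k₀ N 1, show N + (k₀ + 1) = k₀ + N + 1 by ring]
      linarith [hstep (k₀ + N) (Nat.le_add_right _ _)]
  refine (summable_nat_add_iff (k₀ + 1)).mp
    (summable_of_sum_range_le (c := G k₀ - m) (fun _ => hb _) fun N => ?_)
  linarith [hpartial N, hG (k₀ + N) (Nat.le_add_right _ _)]

theorem summable_of_add_mul_le_add_mul {F a : ℕ → ℝ} {c d m : ℝ} {k₀ : ℕ} (hd : 0 ≤ d)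
    (hdc : d < c) (ha : ∀ k, 0 ≤ a k) (hF : ∀ k ≥ k₀, m ≤ F k)
    (hstep : ∀ k ≥ k₀, F (k + 1) + c * a (k + 1) ≤ F k + d * a k) :
    Summable a := by
  have hdecay : Summable fun k => (c - d) * a k :=
    summable_of_add_le_of_le (G := fun k => F k + d * a k) (m := m) (k₀ := k₀)
      (fun k => mul_nonneg (sub_nonneg.mpr hdc.le) (ha k))
      (fun k hk => by nlinarith [hF k hk, ha k])
      (fun k hk => by nlinarith [hstep k hk])
  exact (summable_mul_left_iff (sub_ne_zero.mpr hdc.ne')).mp hdecay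

theorem algorithm1_constant_support_estimates_general {n : ℕ}
    (f : EuclideanSpace ℝ (Fin n) → ℝ)
    (f' : EuclideanSpace ℝ (Fin n) → EuclideanSpace ℝ (Fin n))
    (L mu ombar : ℝ) (om : ℕ → ℝ) (k₀ : ℕ)
    (hL : 0 < L) (hmu : 0 < mu)
    (hom : ∀ k, 0 < om k ∧ om k ≤ ombar) (hombar : ombar < 1)
    (hconv : ConvexOn ℝ Set.univ f)
    (hgrad : ∀ x, HasGradientAt f (f' x) x)
    (hlip : ∀ a b, ‖f' a - f' b‖ ≤ L * ‖a - b‖)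
    (C : Set (EuclideanSpace ℝ (Fin n))) (hCv : Convex ℝ C)
    (hbdd : BddBelow (f '' C))
    (x y : ℕ → EuclideanSpace ℝ (Fin n))
    -- the extrapolated point differs from `x^k` only on the zero set, with
    -- `‖y^{k+1} - x^k‖ ≤ ω_k ‖x^k - x^{k-1}‖`
    (hxy : ∀ k ≥ k₀, ‖y (k + 2) - x (k + 1)‖ ≤ om (k + 1) * ‖x (k + 1) - x k‖)
    (hmem : ∀ k ≥ k₀, x (k + 1) ∈ C)
    -- `x^{k+1}` minimizes `Q(·; y^{k+1})` over `C`
    (hmin : ∀ k ≥ k₀, x (k + 2) ∈ C ∧ ∀ z ∈ C,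
      L / 2 * ‖x (k + 2) - y (k + 2) + L⁻¹ • f' (y (k + 2))‖ ^ 2
          + mu / 2 * ‖x (k + 2) - y (k + 2)‖ ^ 2
        ≤ L / 2 * ‖z - y (k + 2) + L⁻¹ • f' (y (k + 2))‖ ^ 2
          + mu / 2 * ‖z - y (k + 2)‖ ^ 2) :
    (∀ k ≥ k₀,
      f (x (k + 2)) + mu / 2 * ‖x (k + 2) - y (k + 2)‖ ^ 2
          + (L + mu) / 2 * ‖x (k + 2) - x (k + 1)‖ ^ 2
        ≤ f (x (k + 1)) + (L + mu) * om (k + 1) ^ 2 / 2 * ‖x k - x (k + 1)‖ ^ 2) ∧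
      Summable (fun k => ‖x (k + 1) - x k‖ ^ 2) ∧
      Tendsto (fun k => ‖x (k + 1) - x k‖) atTop (nhds 0) := by
  have hstep := fun k (hk : k ≥ k₀) => hconv.inertial_prox_gradient_step_le hL.ne' (by linarith)
    hgrad hlip hCv (hmem k hk) (hmin k hk).1 (isMinOn_iff.mpr (hmin k hk).2) (hxy k hk)
  obtain ⟨m, hm⟩ := hbdd
  have hombar_sq : ombar ^ 2 < 1 := by nlinarith [hom 0]
  have hsum : Summable fun k => ‖x (k + 1) - x k‖ ^ 2 := by
    refine summable_of_add_mul_le_add_mul (F := fun k => f (x (k + 1))) (c := (L + mu) / 2)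
      (d := (L + mu) / 2 * ombar ^ 2) (m := m) (k₀ := k₀) (by positivity) (by nlinarith)
      (fun _ => by positivity) (fun k hk => hm ⟨_, hmem k hk, rfl⟩) fun k hk => ?_
    have hω : om (k + 1) ^ 2 ≤ ombar ^ 2 := pow_le_pow_left₀ (hom _).1.le (hom _).2 2
    calc f (x (k + 2)) + (L + mu) / 2 * ‖x (k + 2) - x (k + 1)‖ ^ 2
        ≤ f (x (k + 2)) + mu / 2 * ‖x (k + 2) - y (k + 2)‖ ^ 2
            + (L + mu) / 2 * ‖x (k + 2) - x (k + 1)‖ ^ 2 := by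
          linarith [show 0 ≤ mu / 2 * ‖x (k + 2) - y (k + 2)‖ ^ 2 by positivity]
      _ ≤ f (x (k + 1)) + (L + mu) * om (k + 1) ^ 2 / 2 * ‖x k - x (k + 1)‖ ^ 2 := hstep k hk
      _ ≤ f (x (k + 1)) + (L + mu) / 2 * ombar ^ 2 * ‖x (k + 1) - x k‖ ^ 2 := by
        rw [norm_sub_rev (x k), mul_div_right_comm]
        gcongr
  refine ⟨hstep, hsum, ?_⟩
  simpa [Real.sqrt_sq (norm_nonneg _)] using hsum.tendsto_atTop_zero.sqrt

/-- Once the support stabilizes (`k ≥ k₀`), each iterate minimizes the strongly convex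
quadratic `Q(·; y^{k+1})` over the fixed set `C = C_{I} ∩ X`, and the Algorithm 1
iterates satisfy the per-step estimate
`f(x^{k+1}) + (μ/2)‖x^{k+1}-y^{k+1}‖² + ((L+μ)/2)‖x^{k+1}-x^k‖²
   ≤ f(x^k) + ((L+μ)ω_k²/2)‖x^{k-1}-x^k‖²`;
consequently `∑‖x^k - x^{k-1}‖² < ∞` and `‖x^k - x^{k-1}‖ → 0`. -/
theorem algorithm1_constant_support_estimates {n : ℕ}
    (f : EuclideanSpace ℝ (Fin n) → ℝ)
    (f' : EuclideanSpace ℝ (Fin n) → EuclideanSpace ℝ (Fin n))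
    (L mu ombar : ℝ) (om : ℕ → ℝ) (k₀ : ℕ)
    (hL : 0 < L) (hmu : 0 < mu)
    (hom : ∀ k, 0 < om k ∧ om k ≤ ombar) (hombar : ombar < 1)
    (hconv : ConvexOn ℝ Set.univ f)
    (hgrad : ∀ x, HasGradientAt f (f' x) x)
    (hlip : ∀ a b, ‖f' a - f' b‖ ≤ L * ‖a - b‖)
    (C : Set (EuclideanSpace ℝ (Fin n))) (hCc : IsClosed C) (hCv : Convex ℝ C)
    (hbdd : BddBelow (f '' C))
    (x y : ℕ → EuclideanSpace ℝ (Fin n))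
    -- the extrapolated point differs from `x^k` only on the zero set, with
    -- `‖y^{k+1} - x^k‖ ≤ ω_k ‖x^k - x^{k-1}‖`
    (hxy : ∀ k ≥ k₀, ‖y (k + 2) - x (k + 1)‖ ≤ om (k + 1) * ‖x (k + 1) - x k‖)
    (hmem : ∀ k ≥ k₀, x (k + 1) ∈ C)
    -- `x^{k+1}` minimizes `Q(·; y^{k+1})` over `C`
    (hmin : ∀ k ≥ k₀, x (k + 2) ∈ C ∧ ∀ z ∈ C,
      L / 2 * ‖x (k + 2) - y (k + 2) + L⁻¹ • f' (y (k + 2))‖ ^ 2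
          + mu / 2 * ‖x (k + 2) - y (k + 2)‖ ^ 2
        ≤ L / 2 * ‖z - y (k + 2) + L⁻¹ • f' (y (k + 2))‖ ^ 2
          + mu / 2 * ‖z - y (k + 2)‖ ^ 2) :
    (∀ k ≥ k₀,
      f (x (k + 2)) + mu / 2 * ‖x (k + 2) - y (k + 2)‖ ^ 2
          + (L + mu) / 2 * ‖x (k + 2) - x (k + 1)‖ ^ 2
        ≤ f (x (k + 1)) + (L + mu) * om (k + 1) ^ 2 / 2 * ‖x k - x (k + 1)‖ ^ 2) ∧
      Summable (fun k => ‖x (k + 1) - x k‖ ^ 2) ∧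
      Tendsto (fun k => ‖x (k + 1) - x k‖) atTop (nhds 0) :=
  algorithm1_constant_support_estimates_general f f' L mu ombar om k₀ hL hmu hom hombar hconv hgrad
    hlip C hCv hbdd x y hxy hmem hmin
end

section
/- Let f : ℝⁿ → ℝ be convex differentiable, λ > 0, X = {x : l ≤ x ≤ u} a box, and H(x) = λ‖x‖₀ + f(x) + δ_X(x). Suppose x* ∈ X satisfies: for every x ∈ X and every index i with x*_i ≠ 0, (x_i − x*_i)(∇f(x*))_i ≥ 0. Then x* is a local minimizer of H: there is a neighborhood U of x* in X on which H(x) ≥ H(x*). -/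
/-! Convexity gives `f x ≥ f x* + ⟪∇f(x*), x - x*⟫`, so it suffices to bound the change of the
penalty `λ‖x‖₀` coordinatewise by the gradient term. Close to `x*` the support of `x` contains that
of `x*`; on the support of `x*` the gradient terms are nonnegative by hypothesis, and every coordinate
that becomes nonzero costs `λ`, which beats its gradient term `|(∇f(x*))_i x_i|` once `x` is close
enough to `x*`. -/

open scoped Classical

open Filter Topology AffineMap

theorem ConvexOn.add_fderiv_sub_le {E : Type*} [NormedAddCommGroup E] [NormedSpace ℝ E]
    {s : Set E} {f : E → ℝ} {f' : E →L[ℝ] ℝ} {x y : E}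
    (hf : ConvexOn ℝ s f) (hx : x ∈ s) (hy : y ∈ s) (hf' : HasFDerivAt f f' x) :
    f x + f' (y - x) ≤ f y := by
  have hline : HasDerivAt (f ∘ lineMap x y) (f' (y - x)) (0 : ℝ) :=
    (lineMap_apply_zero (k := ℝ) x y ▸ hf').comp_hasDerivAt 0 hasDerivAt_lineMap
  have := (hf.comp_affineMap (lineMap x y)).le_slope_of_hasDerivAt
    (by simpa using hx) (by simpa using hy) zero_lt_one hline
  simp only [slope_def_field, Function.comp_apply, lineMap_apply_zero, lineMap_apply_one,
    sub_zero, div_one] at this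
  linarith

theorem ConvexOn.add_inner_sub_le_of_hasGradientAt_s15 {E : Type*} [NormedAddCommGroup E]
    [InnerProductSpace ℝ E] [CompleteSpace E] {s : Set E} {f : E → ℝ} {g x y : E}
    (hf : ConvexOn ℝ s f) (hx : x ∈ s) (hy : y ∈ s) (hg : HasGradientAt f g x) :
    f x + inner ℝ g (y - x) ≤ f y := by
  simpa using hf.add_fderiv_sub_le hx hy hg.hasFDerivAt

theorem ite_eq_zero_le_add_mul_sub {lam g a b : ℝ}
    (hsupp : a ≠ 0 → b ≠ 0 ∧ 0 ≤ (b - a) * g) (hoff : a = 0 → |g * b| < lam) :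
    (if a = 0 then 0 else lam) ≤ (if b = 0 then 0 else lam) + g * (b - a) := by
  by_cases ha : a = 0
  · subst ha
    by_cases hb : b = 0
    · simp [hb]
    · have hgb := neg_lt_of_abs_lt (hoff rfl)
      simp only [hb, if_true, if_false, sub_zero]
      linarith
  · obtain ⟨hb, hlin⟩ := hsupp ha
    simp only [ha, hb, if_false]
    linarith

theorem mul_norm0_eq_sum {n : ℕ} (lam : ℝ) (x : EuclideanSpace ℝ (Fin n)) :
    lam * norm0 x = ∑ i, if x i = 0 then 0 else lam := by
  simp [norm0, Finset.sum_ite, Finset.filter_not, mul_comm]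

theorem eventually_support_subset_and_abs_mul_lt {ι : Type*} [Fintype ι] {lam : ℝ}
    (hlam : 0 < lam) (xs g : EuclideanSpace ℝ ι) :
    ∀ᶠ x in 𝓝 xs, ∀ i, (xs i ≠ 0 → x i ≠ 0) ∧ (xs i = 0 → |g i * x i| < lam) := by
  refine eventually_all.2 fun i => ?_
  have hcoord : Tendsto (fun x : EuclideanSpace ℝ ι => x i) (𝓝 xs) (𝓝 (xs i)) :=
    (PiLp.continuous_apply 2 _ i).tendsto xs
  by_cases hi : xs i = 0
  · have hlim := (hcoord.const_mul (g i)).abs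
    rw [hi, mul_zero, abs_zero] at hlim
    filter_upwards [hlim.eventually (gt_mem_nhds hlam)] with x hx
    exact ⟨fun h => (h hi).elim, fun _ => hx⟩
  · filter_upwards [hcoord.eventually_ne hi] with x hx
    exact ⟨fun _ => hx, fun h => (hi h).elim⟩

theorem mul_norm0_le_add_inner {n : ℕ} {lam : ℝ} {g xs x : EuclideanSpace ℝ (Fin n)}
    (hsupp : ∀ i, xs i ≠ 0 → x i ≠ 0 ∧ 0 ≤ (x i - xs i) * g i)
    (hoff : ∀ i, xs i = 0 → |g i * x i| < lam) :
    lam * norm0 xs ≤ lam * norm0 x + inner ℝ g (x - xs) := by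
  have hinner : inner ℝ g (x - xs) = ∑ i, g i * (x i - xs i) := by
    simp [PiLp.inner_apply, mul_comm]
  rw [mul_norm0_eq_sum, mul_norm0_eq_sum, hinner, ← Finset.sum_add_distrib]
  exact Finset.sum_le_sum fun i _ => ite_eq_zero_le_add_mul_sub (hsupp i) (hoff i)

theorem local_minimizer_criterion_general {n : ℕ}
    (f : EuclideanSpace ℝ (Fin n) → ℝ)
    (f' : EuclideanSpace ℝ (Fin n) → EuclideanSpace ℝ (Fin n))
    (lam : ℝ) (hlam : 0 < lam)
    (X : Set (EuclideanSpace ℝ (Fin n)))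
    (hconv : ConvexOn ℝ Set.univ f)
    (hgrad : ∀ z, HasGradientAt f (f' z) z)
    (xs : EuclideanSpace ℝ (Fin n))
    (hopt : ∀ x ∈ X, ∀ i, xs i ≠ 0 → 0 ≤ (x i - xs i) * f' xs i) :
    ∃ U ∈ nhds xs, ∀ x ∈ U ∩ X,
      lam * norm0 xs + f xs ≤ lam * norm0 x + f x := by
  refine ⟨_, eventually_support_subset_and_abs_mul_lt hlam xs (f' xs), ?_⟩
  rintro x ⟨hnear, hxX⟩
  have hpen : lam * norm0 xs ≤ lam * norm0 x + inner ℝ (f' xs) (x - xs) :=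
    mul_norm0_le_add_inner (fun i hi => ⟨(hnear i).1 hi, hopt x hxX i hi⟩) fun i => (hnear i).2
  have htangent : f xs + inner ℝ (f' xs) (x - xs) ≤ f x :=
    hconv.add_inner_sub_le_of_hasGradientAt_s15 (Set.mem_univ _) (Set.mem_univ _) (hgrad xs)
  linarith

/-- Local minimizer criterion for `H = λ‖·‖₀ + f + δ_X`: if for every `x ∈ X` and
every index `i` in the support of `x*` one has `(x_i - x*_i)(∇f(x*))_i ≥ 0`, then
`x*` is a local minimizer of `H` (expressed as `λ‖·‖₀ + f` on the box `X`). -/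
theorem local_minimizer_criterion {n : ℕ}
    (f : EuclideanSpace ℝ (Fin n) → ℝ)
    (f' : EuclideanSpace ℝ (Fin n) → EuclideanSpace ℝ (Fin n))
    (lam : ℝ) (hlam : 0 < lam) (l u : Fin n → ℝ)
    (X : Set (EuclideanSpace ℝ (Fin n)))
    (hX : X = {x : EuclideanSpace ℝ (Fin n) | ∀ i, l i ≤ x i ∧ x i ≤ u i})
    (hconv : ConvexOn ℝ Set.univ f)
    (hgrad : ∀ z, HasGradientAt f (f' z) z)
    (xs : EuclideanSpace ℝ (Fin n)) (hxs : xs ∈ X)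
    (hopt : ∀ x ∈ X, ∀ i, xs i ≠ 0 → 0 ≤ (x i - xs i) * f' xs i) :
    ∃ U ∈ nhds xs, ∀ x ∈ U ∩ X,
      lam * norm0 xs + f xs ≤ lam * norm0 x + f x :=
  local_minimizer_criterion_general f f' lam hlam X hconv hgrad xs hopt
end

section
/- Let f be convex differentiable, 0 < ω < 1, x* ∈ C, and suppose a sequence satisfies, for all k ≥ k₁, y^{k+1} = x^k + ω(x^k − x^{k-1}), f(x*) ≤ f(x^k), and f(x^{k+1}) ≤ f(x) + (L+μ)⟨x − y^{k+1}, x^{k+1} − y^{k+1}⟩ − ((L+μ)/2)‖x^{k+1} − y^{k+1}‖² for all x ∈ C. Then the sequence u^k := (2/(L+μ)) f(x^k) + ‖x^k − ω x^{k-1} − (1−ω)x*‖² is non-increasing for k ≥ k₁ + 1. -/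
open scoped RealInnerProductSpace

/-- The Lyapunov sequence `u^k = (2/(L+μ)) f(x^k) + ‖x^k - ω x^{k-1} - (1-ω)x*‖²` is
non-increasing for `k ≥ k₁ + 1` under constant extrapolation
`y^{k+1} = x^k + ω(x^k - x^{k-1})` and the projected gradient inequality.
Here `U k` stands for `u^{k+1}` (so that the index `k-1` is avoided). -/
theorem lyapunov_nonincreasing {n : ℕ}
    (f : EuclideanSpace ℝ (Fin n) → ℝ) (L mu om : ℝ)
    (hL : 0 < L) (hmu : 0 < mu) (hom : 0 < om) (hom1 : om < 1)
    (hconv : ConvexOn ℝ Set.univ f) (hdiff : Differentiable ℝ f)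
    (C : Set (EuclideanSpace ℝ (Fin n)))
    (xstar : EuclideanSpace ℝ (Fin n)) (hxstar : xstar ∈ C)
    (x y : ℕ → EuclideanSpace ℝ (Fin n)) (k₁ : ℕ)
    (hmem : ∀ k, x k ∈ C)
    (hy : ∀ k ≥ k₁, y (k + 2) = x (k + 1) + om • (x (k + 1) - x k))
    (hfstar : ∀ k ≥ k₁, f xstar ≤ f (x (k + 1)))
    (hineq : ∀ k ≥ k₁, ∀ x' ∈ C,
      f (x (k + 2)) ≤ f x' + (L + mu) * ⟪x' - y (k + 2), x (k + 2) - y (k + 2)⟫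
        - (L + mu) / 2 * ‖x (k + 2) - y (k + 2)‖ ^ 2) :
    ∀ k ≥ k₁,
      (2 / (L + mu)) * f (x (k + 2))
          + ‖x (k + 2) - om • x (k + 1) - (1 - om) • xstar‖ ^ 2
        ≤ (2 / (L + mu)) * f (x (k + 1))
          + ‖x (k + 1) - om • x k - (1 - om) • xstar‖ ^ 2 := by
  intro k hk
  have h1 := hineq k hk xstar hxstar
  have h2 := hineq k hk (x (k+1)) (hmem (k+1))
  have h3 := hfstar k hk
  have hy' := hy k hk
  set b := y (k+2) with hb
  set c := x (k+2) with hc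
  set p := x (k+1) - om • x k - (1-om) • xstar with hp
  set q := c - om • x (k+1) - (1-om) • xstar with hq
  have hpq : c - b = q - p := by
    rw [hy', hq, hp]; module
  have hcomb : (1-om) • (xstar - b) + om • (x (k+1) - b) = -p := by
    rw [hy', hp]; module
  have key : (1-om)*⟪xstar - b, c - b⟫ + om*⟪x (k+1) - b, c - b⟫
      = ‖p‖^2 - ⟪p, q⟫ := by
    have : (1-om)*⟪xstar - b, c - b⟫ + om*⟪x (k+1) - b, c - b⟫
        = ⟪(1-om) • (xstar - b) + om • (x (k+1) - b), c - b⟫ := by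
      rw [inner_add_left, real_inner_smul_left, real_inner_smul_left]
    rw [this, hcomb, hpq, inner_neg_left, inner_sub_right,
      real_inner_self_eq_norm_sq]
    ring
  have hnorm : ‖c - b‖^2 = ‖p‖^2 - 2*⟪p, q⟫ + ‖q‖^2 := by
    rw [hpq, norm_sub_sq_real, real_inner_comm]
    rw [real_inner_comm]
    ring
  have hLmu : (0:ℝ) < L + mu := by linarith
  rw [div_mul_eq_mul_div, div_mul_eq_mul_div, div_add' _ _ _ (ne_of_gt hLmu),
    div_add' _ _ _ (ne_of_gt hLmu), div_le_div_iff₀ hLmu hLmu]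
  nlinarith [mul_le_mul_of_nonneg_left h1 (by linarith : (0:ℝ) ≤ 1 - om),
    mul_le_mul_of_nonneg_left h2 (le_of_lt hom),
    mul_le_mul_of_nonneg_left h3 (by linarith : (0:ℝ) ≤ 1 - om),
    sq_nonneg (‖p‖ - ‖q‖), mul_pos hLmu hLmu]
end
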